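/- arXiv:2003.01815 — 9 statements merged into one kernel-verified Lean document; each statement's English description precedes it below -/
import Mathlib

section
/- Let n ≥ 1 and let S : ℝⁿ × ℝⁿ → ℝ be any bilinear form. If there is a constant B ∈ ℝ such that S(t, t) ≥ B for every vector t ∈ ℝⁿ with η(t, t) = −1, then S(k, k) ≥ 0 for every null vector k ∈ ℝⁿ. -/
open scoped BigOperators

/-- The Minkowski bilinear form on `ℝⁿ`: `η(x,y) = -x₀y₀ + ∑_{i≥1} xᵢyᵢ`. -/
def minkowski {n : ℕ} (x y : Fin n → ℝ) : ℝ :=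
  ∑ i : Fin n, (if (i : ℕ) = 0 then (-1 : ℝ) else 1) * x i * y i

/-!
Put `P(u) = S(u,u) + B η(u,u)`. Rescaling a timelike `u` to `η(u,u) = -1` shows `P ≥ 0` on all
timelike vectors. A nonzero null `k` is the limit as `ε → 0⁺` of the timelike vectors `k + ε σk`,
where `σ` reverses the spatial coordinates (so `η(k + ε σk, k + ε σk) = -2ε‖k‖²`), and `P` is a
quadratic polynomial in `ε` along this line, hence `S(k,k) = P(k) ≥ 0`.
-/

open Filter Topology

namespace QuadraticMap

variable {V : Type*} [AddCommGroup V] [Module ℝ V]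

theorem nonneg_add_smul_of_forall_eq_neg_one_le (Q f : QuadraticMap ℝ V ℝ) {B : ℝ}
    (hB : ∀ t, Q t = -1 → B ≤ f t) {u : V} (hu : Q u < 0) : 0 ≤ (f + B • Q) u := by
  set c := √(-Q u)
  have hcc : c * c = -Q u := Real.mul_self_sqrt (by linarith)
  have hBu := hB (c⁻¹ • u) (by
    rw [QuadraticMap.map_smul, smul_eq_mul, ← mul_inv, hcc, inv_mul_eq_div, div_neg,
      div_self hu.ne])
  rw [QuadraticMap.map_smul, smul_eq_mul, ← mul_inv, hcc, inv_mul_eq_div,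
    le_div_iff₀ (by linarith)] at hBu
  simp only [add_apply, smul_apply, smul_eq_mul]
  linarith

theorem nonneg_of_forall_pos_nonneg_add_smul (P : QuadraticMap ℝ V ℝ) (k v : V)
    (h : ∀ ε : ℝ, 0 < ε → 0 ≤ P (k + ε • v)) : 0 ≤ P k := by
  have hexpand (ε : ℝ) : P (k + ε • v) = P k + ε * polar P k v + ε ^ 2 * P v := by
    rw [QuadraticMap.map_add P, QuadraticMap.map_smul, polar_smul_right, smul_eq_mul,
      smul_eq_mul]
    ring
  have hcont : Continuous fun ε : ℝ => P (k + ε • v) := by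
    simp_rw [hexpand]
    fun_prop
  have hlim : Tendsto (fun ε : ℝ => P (k + ε • v)) (𝓝[>] 0) (𝓝 (P k)) := by
    simpa using (hcont.tendsto 0).mono_left nhdsWithin_le_nhds
  exact ge_of_tendsto hlim (eventually_nhdsWithin_of_forall h)

end QuadraticMap

def minkowskiForm (n : ℕ) : QuadraticForm ℝ (Fin n → ℝ) :=
  QuadraticMap.weightedSumSquares ℝ fun i : Fin n => if (i : ℕ) = 0 then (-1 : ℝ) else 1

theorem minkowskiForm_apply {n : ℕ} (x : Fin n → ℝ) : minkowskiForm n x = minkowski x x := by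
  simp only [minkowskiForm, QuadraticMap.weightedSumSquares_apply, smul_eq_mul, minkowski,
    mul_assoc]

def spaceReflection {n : ℕ} (x : Fin n → ℝ) : Fin n → ℝ :=
  fun i => if (i : ℕ) = 0 then x i else -x i

theorem minkowski_add_smul_spaceReflection {n : ℕ} (x : Fin n → ℝ) (ε : ℝ) :
    minkowski (x + ε • spaceReflection x) (x + ε • spaceReflection x)
      = (1 + ε ^ 2) * minkowski x x - 2 * ε * ∑ i, x i ^ 2 := by
  simp only [minkowski, Finset.mul_sum, ← Finset.sum_sub_distrib]
  refine Finset.sum_congr rfl fun i _ => ?_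
  simp only [spaceReflection, Pi.add_apply, Pi.smul_apply, smul_eq_mul]
  split_ifs <;> ring

theorem minkowski_add_smul_spaceReflection_neg {n : ℕ} {x : Fin n → ℝ}
    (hx : minkowski x x = 0) (hx0 : x ≠ 0) {ε : ℝ} (hε : 0 < ε) :
    minkowski (x + ε • spaceReflection x) (x + ε • spaceReflection x) < 0 := by
  obtain ⟨i, hi⟩ := Function.ne_iff.1 hx0
  have hsum : 0 < ∑ i, x i ^ 2 :=
    Finset.sum_pos' (fun j _ => sq_nonneg (x j)) ⟨i, Finset.mem_univ i, sq_pos_of_ne_zero hi⟩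
  rw [minkowski_add_smul_spaceReflection, hx]
  nlinarith

theorem tipler_normalized_timelike_bound_implies_nec_general
    (n : ℕ)
    (S : (Fin n → ℝ) →ₗ[ℝ] (Fin n → ℝ) →ₗ[ℝ] ℝ) (B : ℝ)
    (hB : ∀ t : Fin n → ℝ, minkowski t t = -1 → B ≤ S t t) :
    ∀ k : Fin n → ℝ, minkowski k k = 0 → 0 ≤ S k k := by
  intro k hk
  rcases eq_or_ne k 0 with rfl | hk0
  · simp
  have hBQ : ∀ t, minkowskiForm n t = -1 → B ≤ LinearMap.BilinMap.toQuadraticMap S t := by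
    simpa only [minkowskiForm_apply, LinearMap.BilinMap.toQuadraticMap_apply] using hB
  have hP : 0 ≤ (LinearMap.BilinMap.toQuadraticMap S + B • minkowskiForm n) k := by
    refine QuadraticMap.nonneg_of_forall_pos_nonneg_add_smul _ k (spaceReflection k) fun ε hε => ?_
    refine QuadraticMap.nonneg_add_smul_of_forall_eq_neg_one_le _ _ hBQ ?_
    rw [minkowskiForm_apply]
    exact minkowski_add_smul_spaceReflection_neg hk hk0 hε
  simpa [minkowskiForm_apply, hk] using hP

/-- If a bilinear form `S` on `ℝⁿ` is bounded below on the normalized timelike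
vectors (`η(t,t) = -1`), then `S(k,k) ≥ 0` for every null vector `k`. -/
theorem tipler_normalized_timelike_bound_implies_nec
    (n : ℕ) (hn : 1 ≤ n)
    (S : (Fin n → ℝ) →ₗ[ℝ] (Fin n → ℝ) →ₗ[ℝ] ℝ) (B : ℝ)
    (hB : ∀ t : Fin n → ℝ, minkowski t t = -1 → B ≤ S t t) :
    ∀ k : Fin n → ℝ, minkowski k k = 0 → 0 ≤ S k k :=
  tipler_normalized_timelike_bound_implies_nec_general n S B hB
end

section
/- Let n ≥ 1 and let t, ξ ∈ ℝⁿ be co-oriented timelike vectors for the Minkowski bilinear form, i.e. η(t,t) < 0, η(ξ,ξ) < 0 and η(t,ξ) < 0. Then the quadratic form p ↦ 2·η(p,t)·η(p,ξ) − η(t,ξ)·η(p,p) is positive semidefinite: for every p ∈ ℝⁿ one has 2·η(p,t)·η(p,ξ) − η(t,ξ)·η(p,p) ≥ 0. -/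
/-!
For a scalar field with gradient `p`, the stress-energy vector `S = η(p,t) p - ½ η(p,p) t` satisfies
`η(S,S) = ¼ η(p,p)² η(t,t) ≤ 0` and `2 η(S,ξ) = 2 η(p,t) η(p,ξ) - η(t,ξ) η(p,p)`. A computation in
coordinates together with the spatial Cauchy–Schwarz inequality shows that `S` is time-oriented
opposite to `t`, hence opposite to `ξ`; and two causal vectors with opposite time orientation pair
nonnegatively under `η`.
-/

open scoped BigOperators

open Finset

section Bilinear

variable {n : ℕ}

lemma minkowski_comm (x y : Fin n → ℝ) : minkowski x y = minkowski y x := by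
  unfold minkowski
  exact sum_congr rfl fun _ _ => by ring

lemma minkowski_sub_smul_left (a b : ℝ) (x y z : Fin n → ℝ) :
    minkowski (a • x - b • y) z = a * minkowski x z - b * minkowski y z := by
  simp only [minkowski, Pi.sub_apply, Pi.smul_apply, smul_eq_mul, mul_sum, ← sum_sub_distrib]
  exact sum_congr rfl fun _ _ => by ring

/-- The vector `T^a_b t^b` of the stress-energy tensor `T_ab = p_a p_b - ½ η_ab η(p,p)` of a scalar
field with gradient `p`. -/
noncomputable def stressEnergy (p t : Fin n → ℝ) : Fin n → ℝ :=
  minkowski p t • p - (minkowski p p / 2) • t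

lemma minkowski_stressEnergy_left (p t z : Fin n → ℝ) :
    minkowski (stressEnergy p t) z =
      minkowski p t * minkowski p z - minkowski p p / 2 * minkowski t z :=
  minkowski_sub_smul_left _ _ _ _ _

lemma minkowski_stressEnergy_self (p t : Fin n → ℝ) :
    minkowski (stressEnergy p t) (stressEnergy p t) = minkowski p p ^ 2 * minkowski t t / 4 := by
  rw [minkowski_stressEnergy_left, minkowski_comm p (stressEnergy p t),
    minkowski_comm t (stressEnergy p t), minkowski_stressEnergy_left, minkowski_stressEnergy_left,
    minkowski_comm t p]
  ring

lemma minkowski_stressEnergy_self_nonpos (p : Fin n → ℝ) {t : Fin n → ℝ}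
    (ht : minkowski t t ≤ 0) : minkowski (stressEnergy p t) (stressEnergy p t) ≤ 0 := by
  rw [minkowski_stressEnergy_self]
  exact div_nonpos_of_nonpos_of_nonneg (mul_nonpos_of_nonneg_of_nonpos (sq_nonneg _) ht)
    zero_le_four

end Bilinear

section TimeSpace

variable {m : ℕ}

lemma minkowski_eq_neg_mul_add_sum (x y : Fin (m + 1) → ℝ) :
    minkowski x y = -(x 0 * y 0) + ∑ i : Fin m, x i.succ * y i.succ := by
  simp [minkowski, Fin.sum_univ_succ]

lemma sum_sq_succ_le_of_minkowski_self_nonpos {x : Fin (m + 1) → ℝ} (hx : minkowski x x ≤ 0) :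
    ∑ i : Fin m, x i.succ ^ 2 ≤ x 0 ^ 2 := by
  rw [minkowski_eq_neg_mul_add_sum] at hx
  simpa [sq] using hx

lemma sq_sum_mul_succ_le_of_minkowski_self_nonpos {x y : Fin (m + 1) → ℝ}
    (hx : minkowski x x ≤ 0) (hy : minkowski y y ≤ 0) :
    (∑ i : Fin m, x i.succ * y i.succ) ^ 2 ≤ (x 0 * y 0) ^ 2 :=
  calc (∑ i : Fin m, x i.succ * y i.succ) ^ 2
      ≤ (∑ i : Fin m, x i.succ ^ 2) * ∑ i : Fin m, y i.succ ^ 2 :=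
        sum_mul_sq_le_sq_mul_sq _ _ _
    _ ≤ x 0 ^ 2 * y 0 ^ 2 :=
        mul_le_mul (sum_sq_succ_le_of_minkowski_self_nonpos hx)
          (sum_sq_succ_le_of_minkowski_self_nonpos hy) (sum_nonneg fun _ _ => sq_nonneg _)
          (sq_nonneg _)
    _ = (x 0 * y 0) ^ 2 := by ring

lemma minkowski_nonneg_of_mul_nonpos {x y : Fin (m + 1) → ℝ}
    (hx : minkowski x x ≤ 0) (hy : minkowski y y ≤ 0) (hxy : x 0 * y 0 ≤ 0) :
    0 ≤ minkowski x y := by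
  have := sq_sum_mul_succ_le_of_minkowski_self_nonpos hx hy
  rw [minkowski_eq_neg_mul_add_sum]
  nlinarith

lemma mul_pos_of_minkowski_neg {x y : Fin (m + 1) → ℝ}
    (hx : minkowski x x ≤ 0) (hy : minkowski y y ≤ 0) (hxy : minkowski x y < 0) :
    0 < x 0 * y 0 := by
  by_contra! h
  exact (minkowski_nonneg_of_mul_nonpos hx hy h).not_gt hxy

lemma stressEnergy_zero_mul_nonpos (p : Fin (m + 1) → ℝ) {t : Fin (m + 1) → ℝ}
    (ht : minkowski t t ≤ 0) : stressEnergy p t 0 * t 0 ≤ 0 := by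
  -- `S₀ t₀ = -½ (p₀ t₀ - p⃗·t⃗)² + ½ ((p⃗·t⃗)² - |p⃗|² t₀²)`, and `(p⃗·t⃗)² ≤ |p⃗|² |t⃗|² ≤ |p⃗|² t₀²`
  have hcs := sum_mul_sq_le_sq_mul_sq univ (fun i : Fin m => p i.succ) (fun i => t i.succ)
  have htt := sum_sq_succ_le_of_minkowski_self_nonpos ht
  have hpp : 0 ≤ ∑ i : Fin m, p i.succ ^ 2 := sum_nonneg fun _ _ => sq_nonneg _
  simp only [stressEnergy, Pi.sub_apply, Pi.smul_apply, smul_eq_mul,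
    minkowski_eq_neg_mul_add_sum, ← sq]
  nlinarith [sq_nonneg (p 0 * t 0 - ∑ i : Fin m, p i.succ * t i.succ),
    mul_le_mul_of_nonneg_left htt hpp]

end TimeSpace

/-- For co-oriented timelike vectors `t, ξ`, the quadratic form
`p ↦ 2 η(p,t) η(p,ξ) − η(t,ξ) η(p,p)` is positive semidefinite. -/
theorem cooriented_timelike_quadratic_form_nonneg
    (n : ℕ) (hn : 1 ≤ n) (t ξ : Fin n → ℝ)
    (ht : minkowski t t < 0) (hξ : minkowski ξ ξ < 0)
    (htξ : minkowski t ξ < 0) :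
    ∀ p : Fin n → ℝ,
      0 ≤ 2 * minkowski p t * minkowski p ξ - minkowski t ξ * minkowski p p := by
  intro p
  obtain ⟨m, rfl⟩ : ∃ m, n = m + 1 := ⟨n - 1, by omega⟩
  have hS := minkowski_stressEnergy_self_nonpos p ht.le
  have htξ0 : 0 < t 0 * ξ 0 := mul_pos_of_minkowski_neg ht.le hξ.le htξ
  have hSt0 := stressEnergy_zero_mul_nonpos p ht.le
  have hSξ0 : stressEnergy p t 0 * ξ 0 ≤ 0 := by
    refine nonpos_of_mul_nonpos_left (b := t 0 ^ 2) ?_ (sq_pos_of_ne_zero ?_)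
    · calc stressEnergy p t 0 * ξ 0 * t 0 ^ 2 = stressEnergy p t 0 * t 0 * (t 0 * ξ 0) := by ring
        _ ≤ 0 := mul_nonpos_of_nonpos_of_nonneg hSt0 htξ0.le
    · exact left_ne_zero_of_mul htξ0.ne'
  have hSξ := minkowski_nonneg_of_mul_nonpos hS hξ.le hSξ0
  rw [minkowski_stressEnergy_left] at hSξ
  linarith
end

section
/- Let n ≥ 1, let p ∈ ℝⁿ, let V ≥ 0 be a real number, and let t, ξ ∈ ℝⁿ be co-oriented timelike vectors for the Minkowski bilinear form (η(t,t) < 0, η(ξ,ξ) < 0, η(t,ξ) < 0). Then the contracted stress tensor of a scalar field, T(t,ξ) = η(p,t)·η(p,ξ) − (1/2)·η(t,ξ)·(η(p,p) + V), is nonnegative. In other words, a scalar field with nonnegative potential satisfies the dominant energy condition pointwise, off-shell. -/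
open scoped BigOperators

/-!
For fixed `t`, the vector `J = η(p,t) p - ½ η(p,p) t` is `T(t, ·)` at `V = 0`. The reverse
Cauchy–Schwarz inequality `η(p,p) η(t,t) ≤ η(p,t)²` gives `η(J,t) ≥ 0`, and
`η(J,J) = ¼ η(p,p)² η(t,t) ≤ 0`. So `J` is causal and lies in the closed cone opposite to `t`,
hence also opposite to `ξ`: `T(t,ξ) = η(J,ξ) ≥ 0`. The potential only adds `-½ η(t,ξ) V ≥ 0`.
-/

open RealInnerProductSpace

section MinkowskiInner

variable {E : Type*} [NormedAddCommGroup E] [InnerProductSpace ℝ E]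

def minkowskiInner (x y : ℝ × E) : ℝ := ⟪x.2, y.2⟫ - x.1 * y.1

local notation "η" => minkowskiInner

lemma minkowskiInner_comm (x y : ℝ × E) : η x y = η y x := by
  simp only [minkowskiInner, real_inner_comm, mul_comm]

lemma minkowskiInner_smul_sub_smul_left (a b : ℝ) (x y z : ℝ × E) :
    η (a • x - b • y) z = a * η x z - b * η y z := by
  simp only [minkowskiInner, Prod.fst_sub, Prod.snd_sub, Prod.smul_fst, Prod.smul_snd,
    smul_eq_mul, inner_sub_left, real_inner_smul_left]
  ring

lemma minkowskiInner_smul_sub_smul_right (a b : ℝ) (x y z : ℝ × E) :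
    η z (a • x - b • y) = a * η z x - b * η z y := by
  rw [minkowskiInner_comm, minkowskiInner_smul_sub_smul_left, minkowskiInner_comm x,
    minkowskiInner_comm y]

lemma minkowskiInner_self (x : ℝ × E) : η x x = ‖x.2‖ ^ 2 - x.1 ^ 2 := by
  rw [minkowskiInner, real_inner_self_eq_norm_sq, sq x.1]

lemma norm_snd_le_abs_fst {x : ℝ × E} (hx : η x x ≤ 0) : ‖x.2‖ ≤ |x.1| := by
  rw [minkowskiInner_self] at hx
  simpa using sq_le_sq.mp (sub_nonpos.mp hx)

lemma norm_snd_lt_abs_fst {x : ℝ × E} (hx : η x x < 0) : ‖x.2‖ < |x.1| := by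
  rw [minkowskiInner_self] at hx
  simpa using sq_lt_sq.mp (sub_neg.mp hx)

lemma abs_inner_snd_le {u t : ℝ × E} (hu : η u u ≤ 0) (ht : η t t ≤ 0) :
    |⟪u.2, t.2⟫| ≤ |u.1 * t.1| :=
  calc |⟪u.2, t.2⟫| ≤ ‖u.2‖ * ‖t.2‖ := abs_real_inner_le_norm _ _
    _ ≤ |u.1| * |t.1| :=
      mul_le_mul (norm_snd_le_abs_fst hu) (norm_snd_le_abs_fst ht) (norm_nonneg _) (abs_nonneg _)
    _ = |u.1 * t.1| := (abs_mul _ _).symm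

lemma abs_inner_snd_lt {u t : ℝ × E} (hu : η u u ≤ 0) (ht : η t t < 0) (hu₀ : u.1 ≠ 0) :
    |⟪u.2, t.2⟫| < |u.1 * t.1| :=
  calc |⟪u.2, t.2⟫| ≤ ‖u.2‖ * ‖t.2‖ := abs_real_inner_le_norm _ _
    _ ≤ |u.1| * ‖t.2‖ := mul_le_mul_of_nonneg_right (norm_snd_le_abs_fst hu) (norm_nonneg _)
    _ < |u.1| * |t.1| := mul_lt_mul_of_pos_left (norm_snd_lt_abs_fst ht) (abs_pos.mpr hu₀)
    _ = |u.1 * t.1| := (abs_mul _ _).symm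

lemma minkowskiInner_neg_iff {u t : ℝ × E} (hu : η u u ≤ 0) (ht : η t t < 0) :
    η u t < 0 ↔ 0 < u.1 * t.1 := by
  unfold minkowskiInner
  constructor
  · intro hut
    by_contra! hle
    have := abs_inner_snd_le hu ht.le
    rw [abs_of_nonpos hle] at this
    linarith [neg_abs_le ⟪u.2, t.2⟫]
  · intro hpos
    have := abs_inner_snd_lt hu ht (left_ne_zero_of_mul hpos.ne')
    rw [abs_of_pos hpos] at this
    linarith [le_abs_self ⟪u.2, t.2⟫]

lemma minkowskiInner_nonneg_of_coOriented {j t ξ : ℝ × E} (hj : η j j ≤ 0) (ht : η t t < 0)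
    (hξ : η ξ ξ < 0) (htξ : η t ξ < 0) (hjt : 0 ≤ η j t) : 0 ≤ η j ξ := by
  by_contra! hjξ
  have hjξ₀ := (minkowskiInner_neg_iff hj hξ).mp hjξ
  have htξ₀ := (minkowskiInner_neg_iff ht.le hξ).mp htξ
  have hjt₀ : 0 < j.1 * t.1 := by
    have h := mul_pos hjξ₀ htξ₀
    rw [show j.1 * ξ.1 * (t.1 * ξ.1) = j.1 * t.1 * ξ.1 ^ 2 by ring] at h
    exact pos_of_mul_pos_left h (sq_nonneg _)
  exact hjt.not_gt ((minkowskiInner_neg_iff hj ht).mpr hjt₀)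

lemma minkowskiInner_self_mul_self_le_sq (p : ℝ × E) {t : ℝ × E} (ht : η t t < 0) :
    η p p * η t t ≤ η p t ^ 2 := by
  have hcs := real_inner_mul_inner_self_le p.2 t.2
  have hP := real_inner_self_nonneg (x := p.2)
  have hA := real_inner_self_nonneg (x := t.2)
  unfold minkowskiInner at *
  generalize ⟪p.2, t.2⟫ = S, ⟪p.2, p.2⟫ = P, ⟪t.2, t.2⟫ = A, p.1 = c, t.1 = a at *
  rcases hA.eq_or_lt with rfl | hA
  · obtain rfl : S = 0 := by nlinarith
    nlinarith [sq_nonneg a]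
  · -- `A X = (S a - c A)² + (P A - S²)(a² - A)`, `X` being the difference of the two sides
    have key : 0 ≤ A * ((S - c * a) ^ 2 - (P - c * c) * (A - a * a)) := by
      nlinarith [sq_nonneg (S * a - c * A), mul_nonneg (sub_nonneg.mpr hcs) (neg_nonneg.mpr ht.le)]
    nlinarith [(mul_nonneg_iff_of_pos_left hA).mp key]

theorem minkowskiInner_stress_nonneg {p t ξ : ℝ × E} {V : ℝ} (hV : 0 ≤ V) (ht : η t t < 0)
    (hξ : η ξ ξ < 0) (htξ : η t ξ < 0) :
    0 ≤ η p t * η p ξ - (1/2) * η t ξ * (η p p + V) := by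
  set J := η p t • p - (η p p / 2) • t with hJ
  have hJt : η J t = η p t ^ 2 - η p p * η t t / 2 := by
    rw [hJ, minkowskiInner_smul_sub_smul_left]; ring
  have hJJ : η J J = η p p ^ 2 * η t t / 4 := by
    rw [hJ, minkowskiInner_smul_sub_smul_left, minkowskiInner_smul_sub_smul_right,
      minkowskiInner_smul_sub_smul_right, minkowskiInner_comm t p]
    ring
  have hJξ : η J ξ = η p t * η p ξ - η p p / 2 * η t ξ :=
    minkowskiInner_smul_sub_smul_left _ _ _ _ _
  have hJ_causal : η J J ≤ 0 := by
    rw [hJJ]; nlinarith [sq_nonneg (η p p)]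
  have hJt_nonneg : 0 ≤ η J t := by
    rw [hJt]; nlinarith [minkowskiInner_self_mul_self_le_sq p ht, sq_nonneg (η p t)]
  have hJξ_nonneg := minkowskiInner_nonneg_of_coOriented hJ_causal ht hξ htξ hJt_nonneg
  nlinarith [mul_nonneg hV (neg_nonneg.mpr htξ.le)]

end MinkowskiInner

def splitTime {m : ℕ} (x : Fin (m + 1) → ℝ) : ℝ × EuclideanSpace ℝ (Fin m) :=
  (x 0, WithLp.toLp 2 (Fin.tail x))

lemma minkowski_eq_minkowskiInner {m : ℕ} (x y : Fin (m + 1) → ℝ) :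
    minkowski x y = minkowskiInner (splitTime x) (splitTime y) := by
  simp [minkowski, minkowskiInner, splitTime, Fin.sum_univ_succ, PiLp.inner_apply, Fin.tail,
    mul_comm, neg_add_eq_sub]

/-- A scalar field with gradient `p` and nonnegative potential value `V`
satisfies the dominant energy condition pointwise, off-shell:
`T(t,ξ) = η(p,t)η(p,ξ) − (1/2)η(t,ξ)(η(p,p) + V) ≥ 0` for co-oriented timelike `t, ξ`. -/
theorem scalar_field_dec
    (n : ℕ) (hn : 1 ≤ n) (p : Fin n → ℝ) (V : ℝ) (hV : 0 ≤ V)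
    (t ξ : Fin n → ℝ)
    (ht : minkowski t t < 0) (hξ : minkowski ξ ξ < 0)
    (htξ : minkowski t ξ < 0) :
    0 ≤ minkowski p t * minkowski p ξ
        - (1/2) * minkowski t ξ * (minkowski p p + V) := by
  obtain ⟨m, rfl⟩ := Nat.exists_eq_add_of_le' hn
  simp only [minkowski_eq_minkowskiInner] at *
  exact minkowskiInner_stress_nonneg hV ht hξ htξ
end

section
/- Let n ≥ 2 be an integer and θ₀ < 0 a real number, and set T = (n−1)/(−θ₀). There is no function θ : ℝ → ℝ that is differentiable at every point of the interval [0, T], satisfies θ(0) = θ₀, and satisfies the Raychaudhuri inequality θ'(τ) ≤ −θ(τ)²/(n−1) for all τ ∈ [0, T]. In other words, any solution of the Raychaudhuri inequality with negative initial expansion θ₀ must blow up to −∞ within proper time (n−1)/|θ₀|. -/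
/-!
Along a solution of `θ' ≤ -θ²/k` the expansion decreases, so it stays below `θ(a) < 0`, and
then `τ ↦ -1/θ(τ) + τ/k` is nonincreasing. Since `-1/θ` is positive, this caps the length of
any interval on which the solution exists by `k/|θ(a)|`; for `k = n - 1` and `θ(a) = θ₀` that
is exactly `(n-1)/|θ₀|`.
-/

open Set

theorem antitoneOn_Icc_of_deriv_nonpos {f : ℝ → ℝ} {a b : ℝ}
    (hf : ∀ x ∈ Icc a b, DifferentiableAt ℝ f x) (hf' : ∀ x ∈ Icc a b, deriv f x ≤ 0) :
    AntitoneOn f (Icc a b) :=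
  antitoneOn_of_deriv_nonpos (convex_Icc a b)
    (fun x hx => (hf x hx).continuousAt.continuousWithinAt)
    (fun x hx => (hf x (interior_subset hx)).differentiableWithinAt)
    (fun x hx => hf' x (interior_subset hx))

section Riccati

variable {θ : ℝ → ℝ} {a b k : ℝ}

theorem deriv_nonpos_of_deriv_le_neg_sq_div (hk : 0 < k) {τ : ℝ}
    (hτ : deriv θ τ ≤ -θ τ ^ 2 / k) : deriv θ τ ≤ 0 :=
  hτ.trans (div_nonpos_of_nonpos_of_nonneg (neg_nonpos.mpr (sq_nonneg _)) hk.le)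

theorem neg_of_deriv_le_neg_sq_div (hk : 0 < k)
    (hdiff : ∀ τ ∈ Icc a b, DifferentiableAt ℝ θ τ) (hθa : θ a < 0)
    (hineq : ∀ τ ∈ Icc a b, deriv θ τ ≤ -θ τ ^ 2 / k) {τ : ℝ} (hτ : τ ∈ Icc a b) :
    θ τ < 0 :=
  have hanti := antitoneOn_Icc_of_deriv_nonpos hdiff
    fun x hx => deriv_nonpos_of_deriv_le_neg_sq_div hk (hineq x hx)
  (hanti (left_mem_Icc.mpr (hτ.1.trans hτ.2)) hτ hτ.1).trans_lt hθa

theorem antitoneOn_neg_inv_add_div_of_deriv_le_neg_sq_div (hk : 0 < k)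
    (hdiff : ∀ τ ∈ Icc a b, DifferentiableAt ℝ θ τ) (hθa : θ a < 0)
    (hineq : ∀ τ ∈ Icc a b, deriv θ τ ≤ -θ τ ^ 2 / k) :
    AntitoneOn (fun τ => -(θ τ)⁻¹ + τ / k) (Icc a b) := by
  have hderiv : ∀ τ ∈ Icc a b,
      HasDerivAt (fun τ => -(θ τ)⁻¹ + τ / k) (deriv θ τ / θ τ ^ 2 + 1 / k) τ := fun τ hτ =>
    (((hdiff τ hτ).hasDerivAt.inv (neg_of_deriv_le_neg_sq_div hk hdiff hθa hineq hτ).ne).neg.add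
      ((hasDerivAt_id τ).div_const k)).congr_deriv (by ring)
  refine antitoneOn_Icc_of_deriv_nonpos (fun τ hτ => (hderiv τ hτ).differentiableAt)
    fun τ hτ => ?_
  have hθτ := neg_of_deriv_le_neg_sq_div hk hdiff hθa hineq hτ
  rw [(hderiv τ hτ).deriv]
  calc deriv θ τ / θ τ ^ 2 + 1 / k ≤ -θ τ ^ 2 / k / θ τ ^ 2 + 1 / k := by
        gcongr
        exact hineq τ hτ
    _ = 0 := by field_simp [hθτ.ne]; ring

theorem sub_lt_div_neg_of_deriv_le_neg_sq_div (hk : 0 < k) (hab : a ≤ b)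
    (hdiff : ∀ τ ∈ Icc a b, DifferentiableAt ℝ θ τ) (hθa : θ a < 0)
    (hineq : ∀ τ ∈ Icc a b, deriv θ τ ≤ -θ τ ^ 2 / k) :
    b - a < k / -θ a := by
  have hg : -(θ b)⁻¹ + b / k ≤ -(θ a)⁻¹ + a / k :=
    antitoneOn_neg_inv_add_div_of_deriv_le_neg_sq_div hk hdiff hθa hineq
      (left_mem_Icc.mpr hab) (right_mem_Icc.mpr hab) hab
  have hθb : (θ b)⁻¹ < 0 :=
    inv_lt_zero.mpr (neg_of_deriv_le_neg_sq_div hk hdiff hθa hineq (right_mem_Icc.mpr hab))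
  have hba : (b - a) / k < (-θ a)⁻¹ := by
    rw [inv_neg, sub_div]
    linarith
  rwa [div_lt_iff₀ hk, ← div_eq_inv_mul] at hba

end Riccati

/-- Focusing lemma for the Raychaudhuri inequality. For `n ≥ 2` and
`θ₀ < 0`, no function `θ` can be differentiable on all of `[0, (n−1)/(−θ₀)]`, start
at `θ₀`, and satisfy `θ' ≤ −θ²/(n−1)` there: the expansion blows up before that time. -/
theorem raychaudhuri_focusing
    (n : ℕ) (hn : 2 ≤ n) (θ₀ : ℝ) (hθ₀ : θ₀ < 0) :
    ¬ ∃ θ : ℝ → ℝ,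
        (∀ τ ∈ Set.Icc (0 : ℝ) (((n : ℝ) - 1) / (-θ₀)), DifferentiableAt ℝ θ τ) ∧
        θ 0 = θ₀ ∧
        (∀ τ ∈ Set.Icc (0 : ℝ) (((n : ℝ) - 1) / (-θ₀)),
          deriv θ τ ≤ -(θ τ)^2 / ((n : ℝ) - 1)) := by
  rintro ⟨θ, hdiff, h0, hineq⟩
  have hk : (0 : ℝ) < n - 1 := by
    have : (2 : ℝ) ≤ n := by exact_mod_cast hn
    linarith
  have hlifetime := sub_lt_div_neg_of_deriv_le_neg_sq_div hk
    (div_pos hk (neg_pos.mpr hθ₀)).le hdiff (h0 ▸ hθ₀) hineq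
  rw [h0, sub_zero] at hlifetime
  exact lt_irrefl _ hlifetime
end

section
/- Let Λ > 0 and set H = √(Λ/3). Let θ : ℝ → ℝ be differentiable on [0, ∞) and suppose that for all τ ≥ 0 one has θ'(τ) ≤ Λ − θ(τ)²/3 and θ(τ) ≥ √(3Λ). Then for all τ ≥ 0, θ(τ) ≤ √(3Λ) + (θ(0) − √(3Λ))·exp(−2Hτ). In particular, θ converges exponentially (at rate 2H) to the constant de Sitter value √(3Λ). -/
/-!
Since `Λ = 3H²`, the right-hand side `Λ - θ²/3` of the Raychaudhuri inequality is a concave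
parabola in `θ` whose tangent line at the de Sitter value `θ = 3H = √(3Λ)` is `-2H (θ - 3H)`.
Hence `θ - √(3Λ)` satisfies the linear differential inequality `y' ≤ -2H y`, and Grönwall's
inequality bounds it by `(θ 0 - √(3Λ)) exp (-2Hτ)`.
-/

open Real Set

theorem le_mul_exp_of_deriv_le_neg_mul {f : ℝ → ℝ} {k a : ℝ}
    (hdiff : ∀ t ∈ Ici a, DifferentiableAt ℝ f t)
    (hbound : ∀ t ∈ Ici a, deriv f t ≤ -k * f t) :
    ∀ t ∈ Ici a, f t ≤ f a * exp (-k * (t - a)) := by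
  intro t ht
  have hcont : ContinuousOn f (Icc a t) := fun x hx =>
    (hdiff x hx.1).continuousAt.continuousWithinAt
  have hslope : ∀ x ∈ Ico a t, ∀ r, deriv f x < r →
      ∃ᶠ z in nhdsWithin x (Ioi x), (z - x)⁻¹ * (f z - f x) < r := fun x hx _ hr =>
    (hdiff x hx.1).hasDerivAt.hasDerivWithinAt.liminf_right_slope_le hr
  have := le_gronwallBound_of_liminf_deriv_right_le (K := -k) (ε := 0) hcont hslope le_rfl
    (fun x hx => (hbound x hx.1).trans_eq (add_zero _).symm) t ⟨ht, le_rfl⟩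
  rwa [gronwallBound_ε0] at this

theorem sub_sq_div_three_le_tangent (H x : ℝ) :
    3 * H ^ 2 - x ^ 2 / 3 ≤ -(2 * H) * (x - 3 * H) := by
  nlinarith [sq_nonneg (x - 3 * H)]

theorem cosmic_no_hair_exponential_decay_general
    (Λ : ℝ) (hΛ : 0 < Λ) (H : ℝ) (hH : H = Real.sqrt (Λ / 3))
    (θ : ℝ → ℝ)
    (hdiff : ∀ τ ∈ Set.Ici (0 : ℝ), DifferentiableAt ℝ θ τ)
    (hray : ∀ τ ∈ Set.Ici (0 : ℝ), deriv θ τ ≤ Λ - (θ τ)^2 / 3) :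
    ∀ τ ∈ Set.Ici (0 : ℝ),
      θ τ ≤ Real.sqrt (3 * Λ) + (θ 0 - Real.sqrt (3 * Λ)) * Real.exp (-2 * H * τ) := by
  have hH_nonneg : 0 ≤ H := hH ▸ sqrt_nonneg _
  have hΛ_eq : Λ = 3 * H ^ 2 := by
    rw [hH, sq_sqrt (by positivity)]
    ring
  have hsqrt : √(3 * Λ) = 3 * H := by
    rw [sqrt_eq_iff_mul_self_eq (by positivity) (by positivity), hΛ_eq]
    ring
  intro τ hτ
  have hdecay := le_mul_exp_of_deriv_le_neg_mul (f := fun t => θ t - 3 * H) (k := 2 * H)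
    (fun t ht => (hdiff t ht).sub_const _)
    (fun t ht => by
      rw [deriv_sub_const]
      exact (hray t ht).trans (hΛ_eq ▸ sub_sq_div_three_le_tangent H (θ t))) τ hτ
  rw [hsqrt, show -2 * H * τ = -(2 * H) * (τ - 0) by ring]
  linarith

/-- Exponential approach to the de Sitter expansion rate in Wald's cosmic
no-hair theorem. If `θ' ≤ Λ − θ²/3` and `θ ≥ √(3Λ)` on `[0,∞)`, then
`θ(τ) ≤ √(3Λ) + (θ(0) − √(3Λ)) exp(−2Hτ)` with `H = √(Λ/3)`. -/
theorem cosmic_no_hair_exponential_decay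
    (Λ : ℝ) (hΛ : 0 < Λ) (H : ℝ) (hH : H = Real.sqrt (Λ / 3))
    (θ : ℝ → ℝ)
    (hdiff : ∀ τ ∈ Set.Ici (0 : ℝ), DifferentiableAt ℝ θ τ)
    (hray : ∀ τ ∈ Set.Ici (0 : ℝ), deriv θ τ ≤ Λ - (θ τ)^2 / 3)
    (hlow : ∀ τ ∈ Set.Ici (0 : ℝ), Real.sqrt (3 * Λ) ≤ θ τ) :
    ∀ τ ∈ Set.Ici (0 : ℝ),
      θ τ ≤ Real.sqrt (3 * Λ) + (θ 0 - Real.sqrt (3 * Λ)) * Real.exp (-2 * H * τ) :=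
  cosmic_no_hair_exponential_decay_general Λ hΛ H hH θ hdiff hray
end

section
/- Let ξ ∈ [0, 1/2], let φ : ℝ → ℝ be twice continuously differentiable with 8πξφ(λ)² < 1 for all λ ∈ ℝ, and set w(λ) = (1 − 8πξφ(λ)²)⁻¹. Then for every continuously differentiable, compactly supported f : ℝ → ℝ, ∫_ℝ f(λ)² w(λ) ((1−2ξ) φ'(λ)² − 2ξ φ(λ) φ''(λ)) dλ ≥ −2ξ ∫_ℝ w(λ) φ(λ)² f'(λ)² dλ. -/
/-!
Put `w = (1 - 8πξφ²)⁻¹`, so that `w' = 16πξ φ φ' w²`. Adding `2ξ` times the derivative of the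
boundary term `f² w φ φ'`, whose integral vanishes, to the integrand turns the difference of the
two sides into the pointwise sum of squares
`2ξ w (f φ' + f' φ)² + (1 - 2ξ) w (f φ')² + 32πξ² w² φ² (f φ')²`,
which is nonnegative because `0 ≤ ξ ≤ 1/2` and `w > 0`.
-/

open MeasureTheory

theorem HasCompactSupport.integrable_of_continuous_of_eq_zero {X M E : Type*}
    [TopologicalSpace X] [MeasurableSpace X] [OpensMeasurableSpace X] {μ : Measure X}
    [IsFiniteMeasureOnCompacts μ] [Zero M] [NormedAddCommGroup E] {f : X → M} {g : X → E}
    (hf : HasCompactSupport f) (hg : Continuous g) (hfg : ∀ x, f x = 0 → g x = 0) :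
    Integrable g μ :=
  hg.integrable_of_hasCompactSupport <|
    hf.mono <| Function.support_subset_iff'.2 fun x hx => hfg x (Function.notMem_support.1 hx)

theorem integral_le_integral_of_le_add_deriv {u v g g' : ℝ → ℝ} (hu : Integrable u)
    (hv : Integrable v) (hg : Integrable g) (hg' : Integrable g')
    (hderiv : ∀ x, HasDerivAt g (g' x) x) (hle : ∀ x, u x ≤ v x + g' x) :
    ∫ x, u x ≤ ∫ x, v x :=
  calc ∫ x, u x ≤ ∫ x, v x + g' x := integral_mono hu (hv.add hg') hle
    _ = (∫ x, v x) + ∫ x, g' x := integral_add hv hg'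
    _ = ∫ x, v x := by rw [integral_eq_zero_of_hasDerivAt_of_integrable hderiv hg' hg, add_zero]

theorem hasDerivAt_inv_one_sub_mul_sq {φ : ℝ → ℝ} {c φ' x : ℝ} (hφ : HasDerivAt φ φ' x)
    (hx : 1 - c * φ x ^ 2 ≠ 0) :
    HasDerivAt (fun y => (1 - c * φ y ^ 2)⁻¹)
      (2 * c * φ x * φ' * (1 - c * φ x ^ 2)⁻¹ ^ 2) x := by
  refine ((((hφ.fun_pow 2).const_mul c).const_sub 1).fun_inv hx).congr_deriv ?_
  field_simp
  ring

theorem neg_le_null_energy_density_add_boundary_deriv {ξ c w p p' p'' a a' : ℝ}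
    (hξ : ξ ∈ Set.Icc (0 : ℝ) (1 / 2)) (hc : 0 ≤ c) (hw : 0 ≤ w) :
    -(2 * ξ) * (w * p ^ 2 * a' ^ 2)
      ≤ a ^ 2 * w * ((1 - 2 * ξ) * p' ^ 2 - 2 * ξ * p * p'')
        + 2 * ξ * (2 * a * a' * w * p * p' + a ^ 2 * (2 * c * p * p' * w ^ 2) * p * p'
          + a ^ 2 * w * p' ^ 2 + a ^ 2 * w * p * p'') := by
  obtain ⟨hξ0, hξ1⟩ := hξ
  have h₁ : 0 ≤ ξ * w * (a * p' + a' * p) ^ 2 := by positivity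
  have h₂ : 0 ≤ (1 - 2 * ξ) * w * (a * p') ^ 2 :=
    mul_nonneg (mul_nonneg (by linarith) hw) (sq_nonneg _)
  have h₃ : 0 ≤ ξ * c * w ^ 2 * p ^ 2 * (a * p') ^ 2 := by positivity
  linear_combination 2 * h₁ + h₂ + 4 * h₃

/-- Weighted averaged null energy bound for the classical non-minimally
coupled scalar field restricted to a null geodesic. For `ξ ∈ [0, 1/2]`, a `C²` field `φ`
with sub-Planckian values `8πξφ² < 1` and weight `w = (1 − 8πξφ²)⁻¹`, every `C¹`
compactly supported `f` satisfies
`∫ f² w ((1−2ξ)(φ')² − 2ξ φ φ'') ≥ −2ξ ∫ w φ² (f')²`. -/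
theorem nonminimal_scalar_averaged_null_energy_bound
    (ξ : ℝ) (hξ : ξ ∈ Set.Icc (0 : ℝ) (1/2))
    (φ : ℝ → ℝ) (hφ : ContDiff ℝ 2 φ)
    (hsub : ∀ l : ℝ, 8 * Real.pi * ξ * (φ l)^2 < 1)
    (w : ℝ → ℝ) (hw : ∀ l : ℝ, w l = (1 - 8 * Real.pi * ξ * (φ l)^2)⁻¹) :
    ∀ f : ℝ → ℝ, ContDiff ℝ 1 f → HasCompactSupport f →
      -(2 * ξ) * ∫ l : ℝ, w l * (φ l)^2 * (deriv f l)^2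
        ≤ ∫ l : ℝ, (f l)^2 * w l *
            ((1 - 2*ξ) * (deriv φ l)^2 - 2 * ξ * φ l * deriv (deriv φ) l) := by
  intro f hf hfs
  obtain rfl : w = fun l => (1 - 8 * Real.pi * ξ * (φ l)^2)⁻¹ := funext hw
  have hden (l : ℝ) : 1 - 8 * Real.pi * ξ * φ l ^ 2 ≠ 0 := (sub_pos.2 (hsub l)).ne'
  have hφ' : ContDiff ℝ 1 (deriv φ) := hφ.iterate_deriv' 1 1
  have hφc := hφ.continuous
  have hφ'c := hφ'.continuous
  have hφ''c := hφ'.continuous_deriv le_rfl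
  have hfc := hf.continuous
  have hf'c := hf.continuous_deriv le_rfl
  have hwc : Continuous fun l => (1 - 8 * Real.pi * ξ * φ l ^ 2)⁻¹ :=
    Continuous.inv₀ (by fun_prop) hden
  have hc : 0 ≤ 8 * Real.pi * ξ := mul_nonneg (by positivity) hξ.1
  rw [← integral_const_mul]
  refine integral_le_integral_of_le_add_deriv
    (g := fun l => 2 * ξ * (f l ^ 2 * (1 - 8 * Real.pi * ξ * φ l ^ 2)⁻¹ * φ l * deriv φ l))
    (hfs.deriv.integrable_of_continuous_of_eq_zero (by fun_prop) fun l hl => by simp [hl])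
    (hfs.integrable_of_continuous_of_eq_zero (by fun_prop) fun l hl => by simp [hl])
    (hfs.integrable_of_continuous_of_eq_zero (by fun_prop) fun l hl => by simp [hl])
    (hfs.integrable_of_continuous_of_eq_zero (by fun_prop) fun l hl => by simp [hl])
    (fun l => ?_) fun l => neg_le_null_energy_density_add_boundary_deriv hξ hc
      (inv_nonneg.2 (sub_pos.2 (hsub l)).le)
  have hfl := (hf.differentiable one_ne_zero l).hasDerivAt
  have hφl := (hφ.differentiable two_ne_zero l).hasDerivAt
  have hφ'l := (hφ'.differentiable one_ne_zero l).hasDerivAt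
  exact (((((hfl.fun_pow 2).fun_mul (hasDerivAt_inv_one_sub_mul_sq hφl (hden l))).fun_mul
    hφl).fun_mul hφ'l).const_mul (2 * ξ)).congr_deriv (by ring)
end

section
/- Let ρ : ℝ → ℝ be Lebesgue integrable, let f : ℝ → ℝ be continuous with compact support and f(0) ≠ 0, and let C ≥ 0. Suppose that for every t₀ > 0, ∫_ℝ ρ(t) f(t/t₀)² dt ≥ −C/t₀³. Then ∫_ℝ ρ(t) dt ≥ 0. -/
open MeasureTheory Filter Topology

theorem tendsto_integral_mul_comp_div_atTop {μ : Measure ℝ} {ρ g : ℝ → ℝ}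
    (hρ : Integrable ρ μ) (hg : Continuous g) (hgb : ∃ M, ∀ x, ‖g x‖ ≤ M) :
    Tendsto (fun s : ℝ => ∫ t, ρ t * g (t / s) ∂μ) atTop (𝓝 ((∫ t, ρ t ∂μ) * g 0)) := by
  obtain ⟨M, hM⟩ := hgb
  rw [← integral_mul_const]
  refine tendsto_integral_filter_of_dominated_convergence (fun t => ‖ρ t‖ * M)
    (Eventually.of_forall fun s =>
      hρ.aestronglyMeasurable.mul (hg.comp (continuous_id.div_const s)).aestronglyMeasurable)
    (Eventually.of_forall fun s => Eventually.of_forall fun t => ?_)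
    (hρ.norm.mul_const M) (Eventually.of_forall fun t => ?_)
  · rw [norm_mul]
    exact mul_le_mul_of_nonneg_left (hM _) (norm_nonneg _)
  · exact tendsto_const_nhds.mul ((hg.tendsto 0).comp (tendsto_const_nhds.div_atTop tendsto_id))

theorem qei_scaling_limit_awec_general
    (ρ : ℝ → ℝ) (hρ : Integrable ρ)
    (f : ℝ → ℝ) (hf : Continuous f) (hfc : HasCompactSupport f) (hf0 : f 0 ≠ 0)
    (C : ℝ)
    (hqei : ∀ t₀ : ℝ, 0 < t₀ → -(C / t₀^3) ≤ ∫ t : ℝ, ρ t * (f (t / t₀))^2) :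
    0 ≤ ∫ t : ℝ, ρ t := by
  have hbound : ∃ M, ∀ x, ‖f x ^ 2‖ ≤ M := by
    obtain ⟨M, hM⟩ := hf.bounded_above_of_compact_support hfc
    exact ⟨M ^ 2, fun x => norm_pow (f x) 2 ▸ pow_le_pow_left₀ (norm_nonneg _) (hM x) 2⟩
  have hlim := tendsto_integral_mul_comp_div_atTop hρ (hf.pow 2) hbound
  have hlow : Tendsto (fun t₀ : ℝ => -(C / t₀ ^ 3)) atTop (𝓝 0) := by
    simpa using (tendsto_const_nhds.div_atTop (tendsto_pow_atTop (α := ℝ) three_ne_zero)).neg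
  have hscaled : 0 ≤ (∫ t, ρ t) * f 0 ^ 2 :=
    le_of_tendsto_of_tendsto hlow hlim ((eventually_gt_atTop 0).mono hqei)
  exact nonneg_of_mul_nonneg_left hscaled (sq_pos_of_ne_zero hf0)

/-- The long-time scaling limit of a quantum energy inequality yields the
averaged weak energy condition. If `ρ` is integrable, `f` is continuous with compact
support and `f(0) ≠ 0`, and `∫ ρ(t) f(t/t₀)² dt ≥ −C/t₀³` for every `t₀ > 0` with
`C ≥ 0`, then `∫ ρ ≥ 0`. -/
theorem qei_scaling_limit_awec
    (ρ : ℝ → ℝ) (hρ : Integrable ρ)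
    (f : ℝ → ℝ) (hf : Continuous f) (hfc : HasCompactSupport f) (hf0 : f 0 ≠ 0)
    (C : ℝ) (hC : 0 ≤ C)
    (hqei : ∀ t₀ : ℝ, 0 < t₀ → -(C / t₀^3) ≤ ∫ t : ℝ, ρ t * (f (t / t₀))^2) :
    0 ≤ ∫ t : ℝ, ρ t :=
  qei_scaling_limit_awec_general ρ hρ f hf hfc hf0 C hqei
end

section
/- Let H be a complex Hilbert space, Ω ∈ H, and let A : H → H be a positive continuous linear operator (i.e. A is self-adjoint and ⟨x, Ax⟩ ≥ 0 for all x ∈ H). Let S be a set of continuous linear operators on H such that A commutes with every B ∈ S, and such that the set {BΩ : B ∈ S} is dense in H. If ⟨Ω, AΩ⟩ = 0, then A = 0. -/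
/-!
If `T` is positive and `re ⟪x, T x⟫ = 0`, then `t ↦ re ⟪x + t • T x, T (x + t • T x)⟫` is
a nonnegative real quadratic polynomial with no constant term and linear coefficient
`2 ‖T x‖²`, so `T x = 0`; this replaces the square root `A^{1/2}` of the textbook argument.
Hence `A Ω = 0`, so `A (B Ω) = B (A Ω) = 0` for every `B ∈ S`, and `A` vanishes on a dense
set.
-/

open scoped InnerProductSpace

open RCLike in
theorem LinearMap.IsPositive.apply_eq_zero_of_re_inner_eq_zero {𝕜 E : Type*} [RCLike 𝕜]
    [NormedAddCommGroup E] [InnerProductSpace 𝕜 E] {T : E →ₗ[𝕜] E} (hT : T.IsPositive)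
    {x : E} (hx : re ⟪x, T x⟫_𝕜 = 0) : T x = 0 := by
  have hquad (t : ℝ) :
      0 ≤ re ⟪T x, T (T x)⟫_𝕜 * (t * t) + 2 * ‖T x‖ ^ 2 * t + 0 := by
    have h := hT.re_inner_nonneg_right (x + (t : 𝕜) • T x)
    have hsymm : ⟪x, T (T x)⟫_𝕜 = ⟪T x, T x⟫_𝕜 := (hT.isSymmetric x (T x)).symm
    simp only [map_add, map_smul, inner_add_left, inner_add_right, inner_smul_left,
      inner_smul_right, conj_ofReal, hsymm, inner_self_eq_norm_sq_to_K, re_ofReal_mul,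
      ← ofReal_pow, ofReal_re, hx] at h
    linarith
  have hdiscrim := discrim_le_zero hquad
  rw [discrim, mul_zero, sub_zero] at hdiscrim
  have h0 : 2 * ‖T x‖ ^ 2 = 0 :=
    pow_eq_zero_iff two_ne_zero |>.mp (hdiscrim.antisymm (sq_nonneg _))
  simpa using h0

namespace ContinuousLinearMap

variable {R E : Type*} [Semiring R] [TopologicalSpace E] [AddCommMonoid E] [Module R E]

def IsCyclicVector (S : Set (E →L[R] E)) (v : E) : Prop :=
  Dense ((fun B : E →L[R] E => B v) '' S)

theorem eq_zero_of_commute_of_isCyclicVector [T2Space E] {A : E →L[R] E} {S : Set (E →L[R] E)}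
    (hcomm : ∀ B ∈ S, Commute A B) {v : E} (hv : IsCyclicVector S v) (hAv : A v = 0) :
    A = 0 := by
  have hvanish : Set.EqOn A 0 ((fun B : E →L[R] E => B v) '' S) := by
    rintro _ ⟨B, hB, rfl⟩
    change (A * B) v = (0 : E →L[R] E) (B v)
    rw [hcomm B hB]
    exact (congrArg B hAv).trans (map_zero B)
  exact DFunLike.coe_injective <|
    Continuous.ext_on hv A.continuous (0 : E →L[R] E).continuous hvanish

end ContinuousLinearMap

/-- Epstein–Glaser–Jaffe: Let `A` be a positive continuous linear operator
on a complex Hilbert space `H` (self-adjoint with `⟨x, Ax⟩ ≥ 0`), commuting with every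
member of a set `S` of continuous operators such that `{BΩ : B ∈ S}` is dense in `H`.
If `⟨Ω, AΩ⟩ = 0` then `A = 0`. -/
theorem epstein_glaser_jaffe
    (H : Type*) [NormedAddCommGroup H] [InnerProductSpace ℂ H] [CompleteSpace H]
    (Ω : H) (A : H →L[ℂ] H)
    (hsa : IsSelfAdjoint A)
    (hpos : ∀ x : H, 0 ≤ (⟪x, A x⟫_ℂ).re)
    (S : Set (H →L[ℂ] H))
    (hcomm : ∀ B ∈ S, A ∘L B = B ∘L A)
    (hdense : Dense ((fun B : H →L[ℂ] H => B Ω) '' S))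
    (hvac : ⟪Ω, A Ω⟫_ℂ = 0) :
    A = 0 := by
  have hA : A.IsPositive := ⟨hsa.isSymmetric, fun x => by
    rw [ContinuousLinearMap.reApplyInnerSelf_apply, inner_re_symm]
    exact hpos x⟩
  have hAΩ : A Ω = 0 := hA.toLinearMap.apply_eq_zero_of_re_inner_eq_zero (by simp [hvac])
  exact A.eq_zero_of_commute_of_isCyclicVector hcomm hdense hAΩ
end

section
/- Let m, g, μ > 0 and for n > 0 define ρ(n) = n·m + 2πg²n²/μ² and P(n) = 2πg²n²/μ². Then: (i) for every n > mμ²/(4πg²) one has ρ(n) − 3P(n) < 0, i.e. the trace energy condition ρ − 3P ≥ 0 is violated; and (ii) ρ(n)/P(n) → 1 as n → ∞. -/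
/-! Writing `a = 2πg²/μ²`, one has `ρ − 3P = n (m − 2an)`, negative once `n > m/(2a)`,
and `ρ/P = 1 + (m/a)/n → 1`. -/

open Filter Topology

section StiffLimit

variable {m a : ℝ}

theorem mul_add_sq_sub_three_mul_sq_neg (hm : 0 ≤ m) (ha : 0 < a) {n : ℝ}
    (hn : m / (2 * a) < n) : n * m + a * n ^ 2 - 3 * (a * n ^ 2) < 0 := by
  have hn₀ : 0 < n := (div_nonneg hm (by positivity)).trans_lt hn
  have hmn : m < 2 * a * n := (div_lt_iff₀' (by positivity)).mp hn
  nlinarith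

theorem tendsto_mul_add_sq_div_sq_atTop (ha : a ≠ 0) :
    Tendsto (fun n : ℝ => (n * m + a * n ^ 2) / (a * n ^ 2)) atTop (𝓝 1) := by
  have hlim : Tendsto (fun n : ℝ => m / a * n⁻¹ + 1) atTop (𝓝 1) := by
    simpa using (tendsto_inv_atTop_zero.const_mul (m / a)).add_const 1
  refine hlim.congr' ?_
  filter_upwards [eventually_ne_atTop 0] with n hn
  field_simp

end StiffLimit

/-- Zel'dovich: For baryonic matter interacting via a Yukawa potential,
with `ρ(n) = nm + 2πg²n²/μ²` and `P(n) = 2πg²n²/μ²`, the trace energy condition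
`ρ − 3P ≥ 0` fails for all `n > mμ²/(4πg²)`, and `ρ/P → 1` as `n → ∞`. -/
theorem zeldovich_tec_violation
    (m g μ : ℝ) (hm : 0 < m) (hg : 0 < g) (hμ : 0 < μ)
    (ρ P : ℝ → ℝ)
    (hρ : ∀ n : ℝ, ρ n = n * m + 2 * Real.pi * g^2 * n^2 / μ^2)
    (hP : ∀ n : ℝ, P n = 2 * Real.pi * g^2 * n^2 / μ^2) :
    (∀ n : ℝ, m * μ^2 / (4 * Real.pi * g^2) < n → ρ n - 3 * P n < 0) ∧
      Tendsto (fun n : ℝ => ρ n / P n) atTop (nhds 1) := by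
  set a := 2 * Real.pi * g ^ 2 / μ ^ 2
  have ha : 0 < a := by positivity
  have hP' : ∀ n, P n = a * n ^ 2 := fun n => by rw [hP]; ring
  have hρ' : ∀ n, ρ n = n * m + a * n ^ 2 := fun n => by rw [hρ]; ring
  have hthreshold : m * μ ^ 2 / (4 * Real.pi * g ^ 2) = m / (2 * a) := by
    simp only [a]
    field_simp
    ring
  refine ⟨fun n hn => ?_, ?_⟩
  · rw [hρ', hP']
    exact mul_add_sq_sub_three_mul_sq_neg hm.le ha (hthreshold ▸ hn)
  · simpa only [hρ', hP'] using tendsto_mul_add_sq_div_sq_atTop (m := m) ha.ne'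
end
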